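/- arXiv:math/0512351 — 2 statements merged into one kernel-verified Lean document; each statement's English description precedes it below -/
import Mathlib

section
/- Let P be a Lie subalgebra of B = F[x^{±1},t^{±1}] ⊕ FC containing B_0 + B_+ (all x^i f(t) with i ≥ 0, and C), and suppose x^{-1} t^j f(t) ∈ P for a fixed nonzero f ∈ F[t] and all j ∈ ℤ. Then for every i ≥ 1 the component P_{-i} = P ∩ x^{-i} F[t^{±1}] is nonzero; that is, P_{-i} contains a nonzero element of the form x^{-i} g(t). -/
/-- The space `F[x^{±1}, t^{±1}] ⊕ F·C`: an element is a finitely supported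
family of coefficients of the monomials `x^i t^m` `(i,m ∈ ℤ)`, together with a
coefficient of the central element `C`. -/
abbrev LaurentSpace (F : Type*) [Field F] := (ℤ × ℤ →₀ F) × F

/-- The bracket on monomials, obtained by specializing
`[x^i f(t), x^j g(t)] = x^{i+j}(j f' g - i f g') + i δ_{i,-j} Res_t(t^{-1} f g) C`
to `f = t^m`, `g = t^n`:
`[x^i t^m, x^j t^n] = (j m - i n) x^{i+j} t^{m+n-1} + i δ_{i,-j} δ_{m+n,0} C`. -/
noncomputable def lmb (F : Type*) [Field F] (p q : ℤ × ℤ) : LaurentSpace F :=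
  (((q.1 * p.2 - p.1 * q.2 : ℤ) : F) • Finsupp.single (p.1 + q.1, p.2 + q.2 - 1) 1,
   if p.1 = -q.1 ∧ p.2 + q.2 = 0 then ((p.1 : F)) else 0)

/-- The bilinear extension of the bracket to all of `F[x^{±1},t^{±1}] ⊕ F·C`
(the central element `C` brackets to zero with everything). -/
noncomputable def lbr (F : Type*) [Field F] (x y : LaurentSpace F) : LaurentSpace F :=
  x.1.sum fun p a => y.1.sum fun q b => (a * b) • lmb F p q


/-- The element `x^i f(t)` of `F[x^{±1},t^{±1}] ⊕ F·C`. -/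
noncomputable def xf (F : Type*) [Field F] (i : ℤ) (f : ℤ →₀ F) : LaurentSpace F :=
  (f.mapDomain fun m => (i, m), 0)

/-- The central element `C`. -/
def Cel (F : Type*) [Field F] : LaurentSpace F := (0, 1)

/-- Multiplication by `t^j` on Laurent polynomials. -/
noncomputable def shift (F : Type*) [Field F] (f : ℤ →₀ F) (j : ℤ) : ℤ →₀ F :=
  f.mapDomain (· + j)

lemma lbr_xf (F : Type*) [Field F] (e : ℤ) (he : (-1:ℤ) ≠ e) (u g : ℤ →₀ F) :
    lbr F (xf F (-1) u) (xf F (-e) g)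
      = xf F (-1 + -e) (u.sum fun m a => g.sum fun n b =>
          (a * b * ((-e * m + n : ℤ) : F)) • Finsupp.single (m + n - 1) 1) := by
  have step1 : lbr F (xf F (-1) u) (xf F (-e) g)
      = u.sum fun m a => g.sum fun n b => (a * b) • lmb F (-1, m) (-e, n) := by
    show (Finsupp.mapDomain (fun m => ((-1:ℤ), m)) u).sum
        (fun p a => (Finsupp.mapDomain (fun n => ((-e:ℤ), n)) g).sum fun q b =>
          (a*b) • lmb F p q) = _
    rw [Finsupp.sum_mapDomain_index (by simp)
      (by intros; simp [add_mul, add_smul, Finsupp.sum_add])]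
    refine Finsupp.sum_congr fun m _ => ?_
    rw [Finsupp.sum_mapDomain_index (by simp) (by intros; simp [mul_add, add_smul])]
  have hlmb : ∀ m n : ℤ, lmb F (-1, m) (-e, n)
      = (((-e * m + n : ℤ) : F) • Finsupp.single ((-1 + -e : ℤ), m + n - 1) 1, (0:F)) := by
    intro m n
    simp only [lmb]
    have : ¬((-1:ℤ) = -(-e) ∧ m + n = 0) := by
      rintro ⟨h, -⟩; exact he (by omega)
    rw [if_neg this]
    norm_num
  rw [step1]
  simp only [hlmb]
  unfold xf
  rw [Finsupp.mapDomain_sum]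
  simp only [Finsupp.mapDomain_sum, Finsupp.mapDomain_smul, Finsupp.mapDomain_single]
  have hterm : ∀ (m n : ℤ) (a b : F),
      (a * b) • ((((-e*m+n:ℤ):F)) • Finsupp.single ((-1 + -e : ℤ), m+n-1) (1:F), (0:F))
        = ((a * b * ((-e*m+n:ℤ):F)) • Finsupp.single ((-1 + -e : ℤ), m+n-1) (1:F), (0:F)) := by
    intro m n a b
    rw [Prod.smul_mk, smul_smul, smul_zero]
  have hpair : ∀ {ι : Type} (s : Finset ι) (v : ι → (ℤ×ℤ →₀ F)),
      ∑ x ∈ s, (v x, (0:F)) = (∑ x ∈ s, v x, 0) := by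
    intro ι s v
    rw [← prod_mk_sum]
    simp
  simp only [hterm]
  simp only [Finsupp.sum]
  simp only [hpair]

lemma eval_H (F : Type*) [Field F] (e : ℤ) (u g : ℤ →₀ F) (k : ℤ) :
    (u.sum fun m a => g.sum fun n b =>
        (a * b * ((-e * m + n : ℤ) : F)) • Finsupp.single (m + n - 1) (1:F)) k
      = u.sum fun m a => g.sum fun n b =>
          if m + n - 1 = k then a * b * ((-e * m + n : ℤ) : F) else 0 := by
  rw [Finsupp.sum_apply]
  refine Finsupp.sum_congr fun m _ => ?_
  rw [Finsupp.sum_apply]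
  refine Finsupp.sum_congr fun n _ => ?_
  rw [Finsupp.smul_apply, Finsupp.single_apply]
  split_ifs <;> simp

lemma shift_sum (F : Type*) [Field F] (f : ℤ →₀ F) (j : ℤ) (g : ℤ →₀ F) (c : ℤ → ℤ → F)
    (cond : ℤ → ℤ → Prop) [∀ m n, Decidable (cond m n)] :
    ((shift F f j).sum fun m a => g.sum fun n b => if cond m n then a * b * c m n else 0)
      = f.sum fun m a => g.sum fun n b => if cond (m + j) n then a * b * c (m + j) n else 0 := by
  unfold shift
  refine Finsupp.sum_mapDomain_index (fun m => ?_) (fun m b₁ b₂ => ?_)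
  · simp
  · rw [← Finsupp.sum_add]
    refine Finsupp.sum_congr fun n _ => ?_
    split_ifs <;> ring


/-- Let `P` be a Lie subalgebra of `B = F[x^{±1},t^{±1}] ⊕ F·C` containing
`B_0 + B_+` (all `x^i g(t)` with `i ≥ 0`, and `C`), and suppose
`x^{-1} t^j f(t) ∈ P` for a fixed nonzero polynomial `f ∈ F[t]` and all `j ∈ ℤ`.
Then for every `i ≥ 1` the component `P_{-i} = P ∩ x^{-i} F[t^{±1}]` is
nonzero: `P` contains a nonzero element of the form `x^{-i} g(t)`. -/
theorem negative_components_nonzero (F : Type*) [Field F] [CharZero F]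
    (P : Submodule F (LaurentSpace F))
    (hsub : ∀ x y, x ∈ P → y ∈ P → lbr F x y ∈ P)
    (hpos : ∀ i : ℤ, 0 ≤ i → ∀ g : ℤ →₀ F, xf F i g ∈ P)
    (hC : Cel F ∈ P)
    (f : ℤ →₀ F) (hf0 : f ≠ 0) (hfpoly : ∀ m : ℤ, f m ≠ 0 → 0 ≤ m)
    (hfP : ∀ j : ℤ, xf F (-1) (shift F f j) ∈ P) :
    ∀ i : ℤ, 1 ≤ i → ∃ g : ℤ →₀ F, g ≠ 0 ∧ xf F (-i) g ∈ P := by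
  intro i hi
  refine Int.le_induction (motive := fun i _ => ∃ g : ℤ →₀ F, g ≠ 0 ∧ xf F (-i) g ∈ P) ?_ ?_ i hi
  ·  
    refine ⟨f, hf0, ?_⟩
    have h0 := hfP 0
    have : shift F f 0 = f := by
      unfold shift
      have : (fun x : ℤ => x + 0) = id := by funext x; simp
      rw [this, Finsupp.mapDomain_id]
    rwa [this] at h0
  · intro i hi ih

    obtain ⟨g, hg0, hgP⟩ := ih
    -- the product f*g in the group algebra is nonzero
    let fA : AddMonoidAlgebra F ℤ := AddMonoidAlgebra.ofCoeff f
    let gA : AddMonoidAlgebra F ℤ := AddMonoidAlgebra.ofCoeff g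
    have hfg : fA * gA ≠ 0 := mul_ne_zero (AddMonoidAlgebra.ofCoeff_eq_zero.not.mpr hf0)
      (AddMonoidAlgebra.ofCoeff_eq_zero.not.mpr hg0)
    obtain ⟨s0, hs0⟩ : ∃ s : ℤ, (fA * gA).coeff s ≠ 0 := by
      by_contra hcon
      push_neg at hcon
      exact hfg (AddMonoidAlgebra.ext (Finsupp.ext hcon))
    set B0 : F := (fA * gA).coeff s0 with hB0
    set Aval : F := f.sum fun m a => g.sum fun n b =>
      if m + n = s0 then a * b * ((n - i * m : ℤ) : F) else 0 with hAval
    -- choose a suitable shift j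
    obtain ⟨j, hj⟩ : ∃ j : ℤ, Aval - ((i * j : ℤ) : F) * B0 ≠ 0 := by
      by_cases hA : Aval = 0
      · refine ⟨1, ?_⟩
        rw [hA, zero_sub, neg_ne_zero, mul_one]
        refine mul_ne_zero ?_ hs0
        exact_mod_cast (by omega : (i:ℤ) ≠ 0)
      · exact ⟨0, by simpa using hA⟩
    -- the bracket element
    have key := lbr_xf F i (by omega) (shift F f j) g
    set H : ℤ →₀ F := (shift F f j).sum fun m a => g.sum fun n b =>
      (a * b * ((-i * m + n : ℤ) : F)) • Finsupp.single (m + n - 1) 1 with hH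
    have hmem : xf F (-(i+1)) H ∈ P := by
      have : (-(i+1) : ℤ) = -1 + -i := by ring
      rw [this, ← key]
      exact hsub _ _ (hfP j) hgP
    refine ⟨H, ?_, hmem⟩
    -- H is nonzero: its value at s0 - 1 + j is Aval - i*j*B0
    intro hzero
    apply hj
    have hval : H (s0 - 1 + j) = Aval - ((i * j : ℤ) : F) * B0 := by
      rw [hH, eval_H, shift_sum F f j g
        (fun m n => ((-i * m + n : ℤ) : F)) (fun m n => m + n - 1 = s0 - 1 + j)]
      have hsplit : (f.sum fun m a => g.sum fun n b =>
          if (m + j) + n - 1 = s0 - 1 + j then a * b * ((-i * (m + j) + n : ℤ) : F) else 0)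
          = f.sum fun m a => g.sum fun n b =>
            (if m + n = s0 then a * b * ((n - i * m : ℤ) : F) else 0)
            - (if m + n = s0 then a * b * ((i * j : ℤ) : F) else 0) := by
        refine Finsupp.sum_congr fun m _ => Finsupp.sum_congr fun n _ => ?_
        have hc : ((m + j) + n - 1 = s0 - 1 + j) ↔ (m + n = s0) := by omega
        rw [if_congr hc rfl rfl]
        split_ifs with h
        · push_cast; ring
        · ring
      rw [hsplit]
      simp only [Finsupp.sum_sub]
      congr 1
      rw [hB0, AddMonoidAlgebra.coeff_mul, Finsupp.mul_sum]
      refine Finsupp.sum_congr fun m _ => ?_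
      rw [Finsupp.mul_sum]
      refine Finsupp.sum_congr fun n _ => ?_
      split_ifs <;> ring
    rw [← hval, hzero, Finsupp.zero_apply]
end

section
/- Let P_{-1} be a subspace of x^{-1} F[t^{±1}] that is closed under the adjoint action of all t^k (k ∈ ℤ), i.e. [t^k, P_{-1}] ⊆ P_{-1}, and suppose P_{-1} ≠ 0. Let f(t) ∈ F[t] be a nonzero Laurent polynomial of minimal degree-spread with x^{-1} f(t) ∈ P_{-1} (normalized so f ∈ F[t] with f(0) ≠ 0). If moreover [t^{-1}, x^{-1} t f(t)] ∈ P_{-1} whenever x^{-1} t f(t) ∈ P_{-1}, then P_{-1} ⊇ x^{-1} f(t) F[t^{±1}]. -/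
/-- The product of two Laurent polynomials. -/
noncomputable def mulL (F : Type*) [Field F] (f g : ℤ →₀ F) : ℤ →₀ F :=
  f.sum fun m a => g.sum fun n b => Finsupp.single (m + n) (a * b)


lemma lbr_tk (F : Type*) [Field F] (k : ℤ) (h : ℤ →₀ F) :
    lbr F (xf F 0 (Finsupp.single k 1)) (xf F (-1) h)
      = xf F (-1) (((-k : ℤ) : F) • shift F h (k - 1)) := by
  simp only [lbr, xf, shift, Finsupp.mapDomain_single]
  rw [Finsupp.sum_single_index]
  · rw [Finsupp.sum_mapDomain_index]
    · rw [Finsupp.mapDomain_smul, ← Finsupp.mapDomain_comp]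
      have key : ∀ (a : ℤ) (m : F), (1 * m) • lmb F (0, k) (-1, a)
          = (((((-k:ℤ):F)) * m) • Finsupp.single (((-1:ℤ), a + (k-1)) : ℤ × ℤ) (1:F), (0:F)) := by
        intro a m
        have : k + a - 1 = a + (k - 1) := by ring
        simp [lmb, Prod.smul_mk, smul_smul, this, mul_comm]
      simp only [key]
      rw [Finsupp.mapDomain, Finsupp.smul_sum]
      rw [Finsupp.sum, Finsupp.sum]
      refine Prod.ext ?_ ?_
      · rw [Prod.fst_sum]
        apply Finset.sum_congr rfl
        intro a _
        simp [Function.comp, Finsupp.smul_single, mul_comm]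
      · rw [Prod.snd_sum]; simp
    · simp
    · intro m b c; simp [add_smul, mul_add]
  · simp [Finsupp.sum]

noncomputable def xfL (F : Type*) [Field F] (i : ℤ) : (ℤ →₀ F) →ₗ[F] LaurentSpace F :=
  (LinearMap.inl F _ F).comp (Finsupp.lmapDomain F F (fun m => (i, m)))

lemma xf_eq (F : Type*) [Field F] (i : ℤ) (h : ℤ →₀ F) : xf F i h = xfL F i h := rfl

lemma shift_shift (F : Type*) [Field F] (h : ℤ →₀ F) (a b : ℤ) :
    shift F (shift F h a) b = shift F h (a + b) := by
  simp only [shift, ← Finsupp.mapDomain_comp]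
  congr 1
  ext m
  simp [Function.comp]; ring

lemma mulL_eq (F : Type*) [Field F] (f g : ℤ →₀ F) :
    mulL F f g = g.sum fun n b => b • shift F f n := by
  rw [mulL, Finsupp.sum_comm]
  apply Finsupp.sum_congr
  intro n _
  rw [shift, Finsupp.mapDomain, Finsupp.smul_sum]
  apply Finsupp.sum_congr
  intro m _
  rw [Finsupp.smul_single, smul_eq_mul, mul_comm]

/-- Let `P₁ ⊆ x^{-1} F[t^{±1}]` be a nonzero subspace closed under the adjoint
action of all `t^k`, and let `f` be a nonzero element of minimal degree-spread
with `x^{-1} f(t) ∈ P₁`, normalized so that `f ∈ F[t]` with `f(0) ≠ 0` (the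
minimality says: for any nonzero `g` with `x^{-1} g(t) ∈ P₁` and any interval
`[d, D]` containing the support of `g`, `f` is supported in `[0, D - d]`).
If moreover `[t^{-1}, x^{-1} t f(t)] ∈ P₁` whenever `x^{-1} t f(t) ∈ P₁`, then
`P₁ ⊇ x^{-1} f(t) F[t^{±1}]`. -/
theorem P1_contains_f_multiples (F : Type*) [Field F] [CharZero F]
    (P1 : Submodule F (LaurentSpace F))
    (hsupp : ∀ v ∈ P1, ∃ g : ℤ →₀ F, v = xf F (-1) g)
    (had : ∀ k : ℤ, ∀ v ∈ P1, lbr F (xf F 0 (Finsupp.single k 1)) v ∈ P1)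
    (hne : P1 ≠ ⊥)
    (f : ℤ →₀ F)
    (hfpoly : ∀ m : ℤ, f m ≠ 0 → 0 ≤ m) (hf0 : f 0 ≠ 0)
    (hfP : xf F (-1) f ∈ P1)
    (hmin : ∀ g : ℤ →₀ F, g ≠ 0 → xf F (-1) g ∈ P1 →
      ∀ d D : ℤ, (∀ m : ℤ, g m ≠ 0 → d ≤ m ∧ m ≤ D) →
      ∀ m : ℤ, f m ≠ 0 → m ≤ D - d)
    (himpl : xf F (-1) (shift F f 1) ∈ P1 →
      lbr F (xf F 0 (Finsupp.single (-1) 1)) (xf F (-1) (shift F f 1)) ∈ P1) :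
    ∀ g : ℤ →₀ F, xf F (-1) (mulL F f g) ∈ P1 := by
  have hshift : ∀ j : ℤ, j ≠ -1 → xf F (-1) (shift F f j) ∈ P1 := by
    intro j hj
    have h1 := had (j + 1) _ hfP
    rw [lbr_tk] at h1
    have hk : ((-(j+1) : ℤ) : F) ≠ 0 := by
      simp only [ne_eq, Int.cast_eq_zero]; omega
    have h2 := P1.smul_mem (((-(j+1) : ℤ) : F))⁻¹ h1
    rw [xf_eq, map_smul, smul_smul, inv_mul_cancel₀ hk, one_smul, ← xf_eq] at h2
    have : j + 1 - 1 = j := by ring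
    rwa [this] at h2
  have hshiftall : ∀ j : ℤ, xf F (-1) (shift F f j) ∈ P1 := by
    intro j
    rcases eq_or_ne j (-1) with rfl | hj
    · have h1 := himpl (hshift 1 (by omega))
      rw [lbr_tk, shift_shift] at h1
      simpa using h1
    · exact hshift j hj
  intro g
  rw [mulL_eq, xf_eq, map_finsuppSum]
  apply Submodule.sum_mem
  intro n _
  show (xfL F (-1)) ((g n) • shift F f n) ∈ P1
  rw [map_smul]
  exact P1.smul_mem _ ((xf_eq F (-1) (shift F f n)) ▸ hshiftall n)
end
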